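/- A straight-line thrackle on n points in general position has at most n segments: if S is a set of closed straight-line segments with endpoints among n points in general position such that any two distinct segments of S either share an endpoint or cross each other, then |S| ≤ n. -/

import Mathlib

/-!
Call an edge `uv` of the thrackle *pivotal at `u`* if every other edge `uw` at `u` turns
strictly to the left of the ray `u → v`. A vertex carries at most one pivotal edge, and every
edge is pivotal at one of its endpoints: otherwise there are edges `ua` and `vb` with `a`
strictly right and `b` strictly left of the line `uv`; these two segments lie in opposite
closed half-planes and meet the line only in `u` and `v` respectively, so they are disjoint,
and can neither share an endpoint nor cross. Sending each edge to such an endpoint is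
therefore injective.
-/

open Finset

/-- A finite point set in the plane is in general position if no three distinct
points of it are collinear. -/
def GenPos (V : Finset (ℝ × ℝ)) : Prop :=
  ∀ p ∈ V, ∀ q ∈ V, ∀ r ∈ V, p ≠ q → p ≠ r → q ≠ r →
    ¬ Collinear ℝ ({p, q, r} : Set (ℝ × ℝ))

/-- The closed straight-line segment spanned by a (two-element) point set,
as the convex hull of its endpoints. -/
def seg (e : Finset (ℝ × ℝ)) : Set (ℝ × ℝ) := convexHull ℝ (e : Set (ℝ × ℝ))

/-- Two segments cross if they intersect in a single point that is interior to
both (i.e. is not an endpoint of either). -/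
def Crosses (e f : Finset (ℝ × ℝ)) : Prop :=
  ∃! x : ℝ × ℝ, (x ∈ seg e ∩ seg f) ∧ x ∉ (e : Set (ℝ × ℝ)) ∧ x ∉ (f : Set (ℝ × ℝ))

/-- Twice the signed area of the triangle `pqr`: positive iff `r` lies strictly to the left of
the ray `p → q`. -/
noncomputable def orient (p q r : ℝ × ℝ) : ℝ :=
  (q.1 - p.1) * (r.2 - p.2) - (q.2 - p.2) * (r.1 - p.1)

lemma orient_smul_add_smul (u v w z : ℝ × ℝ) {s t : ℝ} (h : s + t = 1) :
    orient u v (s • w + t • z) = s * orient u v w + t * orient u v z := by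
  obtain rfl : s = 1 - t := by linarith
  simp only [orient, Prod.fst_add, Prod.snd_add, Prod.smul_fst, Prod.smul_snd, smul_eq_mul]
  ring

lemma orient_left_self (u v : ℝ × ℝ) : orient u v u = 0 := by unfold orient; ring

lemma orient_swap_left (u v w : ℝ × ℝ) : orient v u w = -orient u v w := by unfold orient; ring

lemma orient_swap_right (u v w : ℝ × ℝ) : orient u w v = -orient u v w := by unfold orient; ring

lemma collinear_of_orient_eq_zero {u v w : ℝ × ℝ} (huv : u ≠ v) (h : orient u v w = 0) :
    Collinear ℝ ({u, v, w} : Set (ℝ × ℝ)) := by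
  have hd : (v.1 - u.1) ^ 2 + (v.2 - u.2) ^ 2 ≠ 0 := by
    intro h0
    apply huv
    ext <;> nlinarith [sq_nonneg (v.1 - u.1), sq_nonneg (v.2 - u.2)]
  -- `w` is its own orthogonal projection onto the line `uv`
  have hw : AffineMap.lineMap u v
      (((w.1 - u.1) * (v.1 - u.1) + (w.2 - u.2) * (v.2 - u.2)) /
        ((v.1 - u.1) ^ 2 + (v.2 - u.2) ^ 2)) = w := by
    unfold orient at h
    ext <;> simp only [AffineMap.lineMap_apply_module', Prod.fst_add, Prod.snd_add,
      Prod.smul_fst, Prod.smul_snd, Prod.fst_sub, Prod.snd_sub, smul_eq_mul] <;> field_simp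
    · linear_combination (v.2 - u.2) * h
    · linear_combination (u.1 - v.1) * h
  have hmem : w ∈ line[ℝ, u, v] := hw ▸ AffineMap.lineMap_mem_affineSpan_pair _ _ _
  rw [Set.pair_comm v w, Set.insert_comm]
  exact collinear_insert_of_mem_affineSpan_pair hmem

lemma GenPos.orient_ne_zero {V : Finset (ℝ × ℝ)} (hV : GenPos V) {u v w : ℝ × ℝ}
    (hu : u ∈ V) (hv : v ∈ V) (hw : w ∈ V) (huv : u ≠ v) (huw : u ≠ w) (hvw : v ≠ w) :
    orient u v w ≠ 0 :=
  fun h ↦ hV u hu v hv w hw huv huw hvw (collinear_of_orient_eq_zero huv h)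

lemma seg_pair (u v : ℝ × ℝ) : seg {u, v} = segment ℝ u v := by
  rw [seg, coe_pair, convexHull_pair]

lemma orient_eq_mul_of_mem_segment {u v a x : ℝ × ℝ} (hx : x ∈ segment ℝ u a) :
    ∃ t, 0 ≤ t ∧ orient u v x = t * orient u v a ∧ (t = 0 → x = u) := by
  obtain ⟨s, t, -, ht, hst, rfl⟩ := hx
  refine ⟨t, ht, by rw [orient_smul_add_smul u v u a hst, orient_left_self]; ring, ?_⟩
  rintro rfl
  obtain rfl : s = 1 := by linarith
  simp

lemma disjoint_seg_of_orient_neg_of_orient_pos {u v a b : ℝ × ℝ} (huv : u ≠ v)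
    (ha : orient u v a < 0) (hb : 0 < orient u v b) :
    Disjoint (seg {u, a}) (seg {v, b}) := by
  rw [seg_pair, seg_pair, Set.disjoint_left]
  intro x hxa hxb
  obtain ⟨t, ht, hxt, hxu⟩ := orient_eq_mul_of_mem_segment (v := v) hxa
  obtain ⟨t', ht', hxt', hxv⟩ := orient_eq_mul_of_mem_segment (v := u) hxb
  rw [orient_swap_left u v x, orient_swap_left u v b] at hxt'
  exact huv ((hxu (by nlinarith)).symm.trans (hxv (by nlinarith)))

lemma not_disjoint_seg_of_nonempty_inter_or_crosses {e f : Finset (ℝ × ℝ)}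
    (h : (e ∩ f).Nonempty ∨ Crosses e f) : ¬ Disjoint (seg e) (seg f) := by
  rw [Set.not_disjoint_iff]
  rcases h with ⟨x, hx⟩ | ⟨x, ⟨hx, -⟩, -⟩
  · rw [mem_inter] at hx
    exact ⟨x, subset_convexHull ℝ _ hx.1, subset_convexHull ℝ _ hx.2⟩
  · exact ⟨x, hx⟩

def Pivotal (S : Finset (Finset (ℝ × ℝ))) (u v : ℝ × ℝ) : Prop :=
  {u, v} ∈ S ∧ ∀ w, {u, w} ∈ S → w ≠ v → 0 < orient u v w

lemma Pivotal.right_unique {S : Finset (Finset (ℝ × ℝ))} {u v w : ℝ × ℝ}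
    (hv : Pivotal S u v) (hw : Pivotal S u w) : v = w := by
  by_contra hne
  have h₁ := hv.2 w hw.1 (Ne.symm hne)
  have h₂ := hw.2 v hv.1 hne
  rw [orient_swap_right] at h₂
  linarith

lemma exists_orient_neg_of_not_pivotal {V : Finset (ℝ × ℝ)} (hV : GenPos V)
    {S : Finset (Finset (ℝ × ℝ))} (hS : ∀ e ∈ S, e ∈ V.powersetCard 2) {u v : ℝ × ℝ}
    (hu : u ∈ V) (hv : v ∈ V) (huv : u ≠ v) (he : {u, v} ∈ S) (h : ¬ Pivotal S u v) :
    ∃ a, {u, a} ∈ S ∧ orient u v a < 0 := by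
  simp only [Pivotal, he, true_and, not_forall, not_lt] at h
  obtain ⟨a, ha, hav, hle⟩ := h
  obtain ⟨hsub, hcard⟩ := mem_powersetCard.mp (hS _ ha)
  have hua : u ≠ a := by
    rintro rfl
    simp at hcard
  have hne := hV.orient_ne_zero hu hv (hsub (by simp)) huv hua (Ne.symm hav)
  exact ⟨a, ha, lt_of_le_of_ne hle hne⟩

lemma exists_pivotal_of_mem {V : Finset (ℝ × ℝ)} (hV : GenPos V)
    {S : Finset (Finset (ℝ × ℝ))} (hS : ∀ e ∈ S, e ∈ V.powersetCard 2)
    (hthr : ∀ e ∈ S, ∀ f ∈ S, e ≠ f → (e ∩ f).Nonempty ∨ Crosses e f)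
    {e : Finset (ℝ × ℝ)} (he : e ∈ S) :
    ∃ u ∈ V, ∃ v, e = {u, v} ∧ Pivotal S u v := by
  obtain ⟨hsub, hcard⟩ := mem_powersetCard.mp (hS e he)
  obtain ⟨u, v, huv, rfl⟩ := card_eq_two.mp hcard
  have hu : u ∈ V := hsub (by simp)
  have hv : v ∈ V := hsub (by simp)
  by_cases hpu : Pivotal S u v
  · exact ⟨u, hu, v, rfl, hpu⟩
  by_cases hpv : Pivotal S v u
  · exact ⟨v, hv, u, pair_comm u v, hpv⟩
  exfalso
  obtain ⟨a, ha, hao⟩ := exists_orient_neg_of_not_pivotal hV hS hu hv huv he hpu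
  obtain ⟨b, hb, hbo⟩ :=
    exists_orient_neg_of_not_pivotal hV hS hv hu huv.symm (pair_comm u v ▸ he) hpv
  rw [orient_swap_left, neg_neg_iff_pos] at hbo
  have hdisj := disjoint_seg_of_orient_neg_of_orient_pos huv hao hbo
  have hne : ({u, a} : Finset (ℝ × ℝ)) ≠ {v, b} := by
    intro heq
    rw [heq, disjoint_self, Set.bot_eq_empty, seg_pair] at hdisj
    exact (Set.nonempty_of_mem (left_mem_segment ℝ v b)).ne_empty hdisj
  exact not_disjoint_seg_of_nonempty_inter_or_crosses (hthr _ ha _ hb hne) hdisj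

/-- Erdős: a straight-line thrackle on n points in general position has at most
n segments. -/
theorem thrackle_card_le (V : Finset (ℝ × ℝ)) (hV : GenPos V)
    (S : Finset (Finset (ℝ × ℝ))) (hS : ∀ e ∈ S, e ∈ V.powersetCard 2)
    (hthr : ∀ e ∈ S, ∀ f ∈ S, e ≠ f → (e ∩ f).Nonempty ∨ Crosses e f) :
    S.card ≤ V.card := by
  refine card_le_card_of_forall_subsingleton (fun e u ↦ ∃ v, e = {u, v} ∧ Pivotal S u v)
    (fun e he ↦ exists_pivotal_of_mem hV hS hthr he) ?_
  rintro u - _ ⟨-, v, rfl, hv⟩ _ ⟨-, w, rfl, hw⟩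
  rw [hv.right_unique hw]
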